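/- arXiv:1103.2829 — 3 statements merged into one kernel-verified Lean document; each statement's English description precedes it below -/
import Mathlib

section
/- For an opinion vector y in an SBC or SBI system with fvct(y) = lim_{t→∞} A(y)^t y, if G_r(y) = G_r(fvct(y)), then in any weakly connected component of G_r(fvct(y)) the agent attaining the minimum opinion value of fvct(y) in that component, as well as the agent attaining the maximum, must belong to a sink strongly connected component (closed-minded component). -/
open Filter Matrix Finset

/-- Averaging adjacency matrix of the proximity digraph with bound function `B`
(`B i j = r i` for SBC, `B i j = r j` for SBI). -/
noncomputable def adjMat {n : ℕ} (B : Fin n → Fin n → ℝ) (y : Fin n → ℝ) :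
    Matrix (Fin n) (Fin n) ℝ :=
  Matrix.of fun i j =>
    if |y i - y j| ≤ B i j
    then ((Finset.univ.filter (fun k => |y i - y k| ≤ B i k)).card : ℝ)⁻¹
    else 0

/-!
The limit `f` is a fixed point of `A(y)`, and `A(y) = A(f)` because the two proximity digraphs
coincide; so every `f i` is the average of `f` over the out-neighbours of `i`. If `f i` is minimal
among these values, they all equal `f i`. Hence along any directed path leaving the minimiser
`i₀` of a weakly connected component the opinion stays `f i₀`, so every node `k` reached from
`i₀` has `|f k - f i₀| = 0 ≤ B k i₀` and points straight back to `i₀`. The maximum is the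
minimum of `-f`, which has the same proximity digraph.
-/

lemma mulVec_eq_self_of_tendsto_pow_mulVec {ι R : Type*} [Fintype ι] [DecidableEq ι]
    [Semiring R] [TopologicalSpace R] [IsTopologicalSemiring R] [T2Space R]
    {A : Matrix ι ι R} {v w : ι → R} (h : Tendsto (fun t : ℕ => (A ^ t) *ᵥ v) atTop (nhds w)) :
    A *ᵥ w = w := by
  have hshift : Tendsto (fun t : ℕ => A *ᵥ ((A ^ t) *ᵥ v)) atTop (nhds w) := by
    simpa only [Function.comp_def, pow_succ', ← mulVec_mulVec] using
      h.comp (tendsto_add_atTop_nat 1)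
  exact tendsto_nhds_unique (((continuous_const.matrix_mulVec continuous_id).tendsto w).comp h)
    hshift

section ProximityDigraph

variable {n : ℕ} (B : Fin n → Fin n → ℝ) (x : Fin n → ℝ)

/-- The edge relation `i → j` of the proximity digraph `G_r(x)`. -/
def Proximal (i j : Fin n) : Prop := |x i - x j| ≤ B i j

noncomputable instance : DecidableRel (Proximal B x) := fun _ _ => Real.decidableLE _ _

lemma adjMat_apply (i j : Fin n) :
    adjMat B x i j = if Proximal B x i j then (#(univ.filter (Proximal B x i)) : ℝ)⁻¹ else 0 :=
  rfl

variable {B x}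

lemma proximal_neg : Proximal B (-x) = Proximal B x := by
  ext i j
  simp only [Proximal, Pi.neg_apply, neg_sub_neg, abs_sub_comm]

lemma adjMat_eq_of_proximal_eq {y : Fin n → ℝ} (h : Proximal B x = Proximal B y) :
    adjMat B x = adjMat B y := by
  ext i j
  simp only [adjMat_apply, h]

lemma adjMat_neg : adjMat B (-x) = adjMat B x :=
  adjMat_eq_of_proximal_eq proximal_neg

/-- At a fixed point of `adjMat B x`, each `x i` is the mean of `x` over the out-neighbours
of `i` (when `i` has none, the sum is empty). -/
lemma sum_proximal_sub_eq_zero (hfix : adjMat B x *ᵥ x = x) (i : Fin n) :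
    ∑ k ∈ univ.filter (Proximal B x i), (x k - x i) = 0 := by
  set N := univ.filter (Proximal B x i)
  rcases N.eq_empty_or_nonempty with hN | hN
  · rw [hN, sum_empty]
  have hmean : ∑ k ∈ N, (N.card : ℝ)⁻¹ * x k = x i := by
    rw [← congrFun hfix i, mulVec, dotProduct, sum_filter]
    refine sum_congr rfl fun k _ => ?_
    rw [adjMat_apply]
    split_ifs <;> simp [N]
  have hcard : (N.card : ℝ) ≠ 0 := by exact_mod_cast hN.card_pos.ne'
  rw [← mul_sum, inv_mul_eq_iff_eq_mul₀ hcard] at hmean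
  rw [sum_sub_distrib, hmean, sum_const, nsmul_eq_mul, sub_self]

lemma eq_of_proximal_of_forall_proximal_le (hfix : adjMat B x *ᵥ x = x) {i j : Fin n}
    (hmin : ∀ k, Proximal B x i k → x i ≤ x k) (hij : Proximal B x i j) : x j = x i := by
  have hzero := (sum_eq_zero_iff_of_nonneg fun k hk => sub_nonneg.2 <|
    hmin k (mem_filter.1 hk).2).1 (sum_proximal_sub_eq_zero hfix i)
  exact sub_eq_zero.1 <| hzero j (mem_filter.2 ⟨mem_univ j, hij⟩)

lemma eq_of_reflTransGen_of_isMin (hfix : adjMat B x *ᵥ x = x) {i₀ : Fin n}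
    (hmin : ∀ j, Relation.ReflTransGen (Relation.SymmGen (Proximal B x)) i₀ j → x i₀ ≤ x j)
    {k : Fin n} (hk : Relation.ReflTransGen (Proximal B x) i₀ k) : x k = x i₀ := by
  induction hk with
  | refl => rfl
  | @tail a b hpath hab ih =>
    refine (eq_of_proximal_of_forall_proximal_le hfix (fun c hac => ?_) hab).trans ih
    rw [ih]
    exact hmin c <| (Relation.ReflTransGen.mono (fun _ _ => .of_rel) _ _ hpath).tail (.of_rel hac)

lemma reflTransGen_symm_of_isMin (hfix : adjMat B x *ᵥ x = x) {i₀ : Fin n}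
    (hB : ∀ k, 0 ≤ B k i₀)
    (hmin : ∀ j, Relation.ReflTransGen (Relation.SymmGen (Proximal B x)) i₀ j → x i₀ ≤ x j)
    {k : Fin n} (hk : Relation.ReflTransGen (Proximal B x) i₀ k) :
    Relation.ReflTransGen (Proximal B x) k i₀ := by
  refine .single ?_
  rw [Proximal, eq_of_reflTransGen_of_isMin hfix hmin hk, sub_self, abs_zero]
  exact hB k

end ProximityDigraph

/-- If `fvct y = lim A(y)^t y` and `G_r(y) = G_r(fvct y)`, then in any
weakly connected component of `G_r(fvct y)`, the agents attaining the minimum and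
the maximum value of `fvct y` on that component lie in a sink strongly connected
component (i.e. every node they reach, reaches them back). -/
theorem stmt5 {n : ℕ} (r : Fin n → ℝ) (B : Fin n → Fin n → ℝ) (y f : Fin n → ℝ)
    (hr : ∀ i, 0 < r i)
    (hB : (∀ i j, B i j = r i) ∨ (∀ i j, B i j = r j))
    (hf : ∀ i, Tendsto (fun t => ((adjMat B y ^ t) *ᵥ y) i) atTop (nhds (f i)))
    (hG : ∀ i j, (|y i - y j| ≤ B i j) ↔ (|f i - f j| ≤ B i j))
    (i0 i1 : Fin n)
    (hmin : ∀ j, Relation.ReflTransGen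
        (fun a b => |f a - f b| ≤ B a b ∨ |f b - f a| ≤ B b a) i0 j → f i0 ≤ f j)
    (hmax : ∀ j, Relation.ReflTransGen
        (fun a b => |f a - f b| ≤ B a b ∨ |f b - f a| ≤ B b a) i1 j → f j ≤ f i1) :
    (∀ k, Relation.ReflTransGen (fun a b => |f a - f b| ≤ B a b) i0 k →
        Relation.ReflTransGen (fun a b => |f a - f b| ≤ B a b) k i0) ∧
    (∀ k, Relation.ReflTransGen (fun a b => |f a - f b| ≤ B a b) i1 k →
        Relation.ReflTransGen (fun a b => |f a - f b| ≤ B a b) k i1) := by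
  have hB_nonneg : ∀ i j, 0 ≤ B i j := by
    rcases hB with h | h <;> exact fun i j => h i j ▸ (hr _).le
  have hfix : adjMat B f *ᵥ f = f := by
    have hGf : Proximal B y = Proximal B f := funext₂ fun i j => propext (hG i j)
    rw [← adjMat_eq_of_proximal_eq hGf]
    exact mulVec_eq_self_of_tendsto_pow_mulVec (tendsto_pi_nhds.2 hf)
  have hfix_neg : adjMat B (-f) *ᵥ (-f) = -f := by rw [adjMat_neg, mulVec_neg, hfix]
  refine ⟨fun k => reflTransGen_symm_of_isMin hfix (hB_nonneg · i0) hmin, fun k hk => ?_⟩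
  have hsink :=
    reflTransGen_symm_of_isMin (x := -f) (i₀ := i1) (k := k) hfix_neg (hB_nonneg · i1)
  rw [proximal_neg] at hsink
  exact hsink (fun j hj => neg_le_neg (hmax j hj)) hk
end

section
/- (Invariance of equi-topology neighborhood.) Let z be an equilibrium opinion vector (z = A(z)z) and define δ_i(z) = min{ ε_j(z) : j is a predecessor of i in G_r(z) } (every node being a predecessor of itself). If x(0) belongs to the invariant equi-topology neighborhood of z (|x_i(0) − z_i| < δ_i(z) when δ_i(z) > 0, = when δ_i(z) = 0), then the trajectory x(t+1) = A(x(t))x(t) satisfies x(t) ∈ equi-topology neighborhood of z and G_r(x(t)) = G_r(z) for all t ≥ 0. -/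
open Filter Matrix Finset

/-- Equi-topology distance `ε`. -/
noncomputable def epsDist {n : ℕ} (r z : Fin n → ℝ) (i : Fin n) : ℝ :=
  (1 / 2) * sInf {d : ℝ | ∃ j, j ≠ i ∧
    (d = |(|z i - z j| - r i)| ∨ d = |(|z i - z j| - r j)|)}

/-- Invariant equi-topology distance `δ i = min { ε j : j a predecessor of i in G_r(z) }`. -/
noncomputable def deltaDist {n : ℕ} (r : Fin n → ℝ) (B : Fin n → Fin n → ℝ)
    (z : Fin n → ℝ) (i : Fin n) : ℝ :=
  sInf {d : ℝ | ∃ j, Relation.ReflTransGen (fun a b => |z a - z b| ≤ B a b) j i ∧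
    d = epsDist r z j}

lemma eps_nonneg {n : ℕ} (r z : Fin n → ℝ) (i : Fin n) : 0 ≤ epsDist r z i := by
  unfold epsDist
  have h : 0 ≤ sInf {d : ℝ | ∃ j, j ≠ i ∧
      (d = |(|z i - z j| - r i)| ∨ d = |(|z i - z j| - r j)|)} := by
    apply Real.sInf_nonneg
    rintro d ⟨j, _, h | h⟩ <;> simp [h]
  linarith

lemma eps_le' {n : ℕ} (r z : Fin n → ℝ) {i j : Fin n} (hij : j ≠ i) (b : ℝ)
    (hb : b = r i ∨ b = r j) :
    epsDist r z i ≤ (1/2) * |(|z i - z j| - b)| := by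
  unfold epsDist
  have hbdd : BddBelow {d : ℝ | ∃ j, j ≠ i ∧
      (d = |(|z i - z j| - r i)| ∨ d = |(|z i - z j| - r j)|)} := by
    refine ⟨0, ?_⟩
    rintro d ⟨k, _, h | h⟩ <;> simp [h]
  have hmem : |(|z i - z j| - b)| ∈ {d : ℝ | ∃ j, j ≠ i ∧
      (d = |(|z i - z j| - r i)| ∨ d = |(|z i - z j| - r j)|)} := by
    refine ⟨j, hij, ?_⟩
    rcases hb with h | h
    · left; rw [h]
    · right; rw [h]
  have := csInf_le hbdd hmem
  linarith

section delta
variable {n : ℕ} (r : Fin n → ℝ) (B : Fin n → Fin n → ℝ) (z : Fin n → ℝ)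

lemma delta_bdd (i : Fin n) : BddBelow {d : ℝ | ∃ j,
    Relation.ReflTransGen (fun a b => |z a - z b| ≤ B a b) j i ∧ d = epsDist r z j} := by
  refine ⟨0, ?_⟩
  rintro d ⟨j, _, rfl⟩
  exact eps_nonneg r z j

lemma delta_nonneg (i : Fin n) : 0 ≤ deltaDist r B z i := by
  apply Real.sInf_nonneg
  rintro d ⟨j, _, rfl⟩
  exact eps_nonneg r z j

lemma delta_le_eps_of_reach {i j : Fin n}
    (h : Relation.ReflTransGen (fun a b => |z a - z b| ≤ B a b) j i) :
    deltaDist r B z i ≤ epsDist r z j :=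
  csInf_le (delta_bdd r B z i) ⟨j, h, rfl⟩

lemma delta_le_eps (i : Fin n) : deltaDist r B z i ≤ epsDist r z i :=
  delta_le_eps_of_reach r B z Relation.ReflTransGen.refl

lemma delta_mono {i j : Fin n} (h : |z i - z j| ≤ B i j) :
    deltaDist r B z j ≤ deltaDist r B z i := by
  unfold deltaDist
  refine le_csInf ⟨epsDist r z i, ⟨i, Relation.ReflTransGen.refl, rfl⟩⟩ ?_
  rintro d ⟨k, hk, rfl⟩
  exact csInf_le (delta_bdd r B z j) ⟨k, hk.tail h, rfl⟩

end delta

lemma graph_eq {n : ℕ} (r : Fin n → ℝ) (B : Fin n → Fin n → ℝ) (z : Fin n → ℝ)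
    (hB : (∀ i j, B i j = r i) ∨ (∀ i j, B i j = r j))
    (x : Fin n → ℝ)
    (hx : ∀ i, x i = z i ∨ |x i - z i| < epsDist r z i) :
    ∀ i j, (|x i - x j| ≤ B i j) ↔ (|z i - z j| ≤ B i j) := by
  intro i j
  rcases eq_or_ne j i with rfl | hij
  · simp
  · have hbi : B i j = r i ∨ B i j = r j := by
      rcases hB with h | h
      · exact Or.inl (h i j)
      · exact Or.inr (h i j)
    have hbj : B i j = r j ∨ B i j = r i := hbi.symm
    have hi := eps_le' r z hij (B i j) hbi
    have hj := eps_le' r z hij.symm (B i j) hbj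
    have hcomm : |z j - z i| = |z i - z j| := abs_sub_comm _ _
    rw [hcomm] at hj
    rcases hx i with hxi | hxi <;> rcases hx j with hxj | hxj
    · rw [hxi, hxj]
    all_goals {
      have hc0 : (0:ℝ) ≤ |(|z i - z j| - B i j)| := abs_nonneg _
      have hkey : |x i - z i| + |x j - z j| < |(|z i - z j| - B i j)| := by
        first
        | (rw [hxi]; simp only [sub_self, abs_zero]; linarith)
        | (rw [hxj]; simp only [sub_self, abs_zero]; linarith)
        | (have := eps_nonneg r z i; linarith)
      have t1 : |x i - x j| ≤ |x i - z i| + |z i - z j| + |x j - z j| := by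
        have h1 := abs_add_le (x i - z i + (z i - z j)) (z j - x j)
        have h2 := abs_add_le (x i - z i) (z i - z j)
        have h3 : x i - z i + (z i - z j) + (z j - x j) = x i - x j := by ring
        rw [h3] at h1
        have h4 : |z j - x j| = |x j - z j| := abs_sub_comm _ _
        linarith
      have t2 : |z i - z j| ≤ |x i - z i| + |x i - x j| + |x j - z j| := by
        have h1 := abs_add_le (z i - x i + (x i - x j)) (x j - z j)
        have h2 := abs_add_le (z i - x i) (x i - x j)
        have h3 : z i - x i + (x i - x j) + (x j - z j) = z i - z j := by ring
        rw [h3] at h1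
        have h4 : |z i - x i| = |x i - z i| := abs_sub_comm _ _
        linarith
      rcases le_or_gt (|z i - z j|) (B i j) with hz | hz
      · have hc : |(|z i - z j| - B i j)| = B i j - |z i - z j| := by
          rw [abs_sub_comm]; exact abs_of_nonneg (by linarith)
        rw [hc] at hkey
        exact ⟨fun _ => hz, fun _ => by linarith⟩
      · have hc : |(|z i - z j| - B i j)| = |z i - z j| - B i j :=
          abs_of_nonneg (by linarith)
        rw [hc] at hkey
        constructor <;> intro hle <;> linarith
    }

lemma adj_eq {n : ℕ} (B : Fin n → Fin n → ℝ) (z : Fin n → ℝ) (x : Fin n → ℝ)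
    (hg : ∀ i j, (|x i - x j| ≤ B i j) ↔ (|z i - z j| ≤ B i j)) :
    adjMat B x = adjMat B z := by
  unfold adjMat
  ext i j
  simp only [Matrix.of_apply]
  have hfilter : Finset.univ.filter (fun k => |x i - x k| ≤ B i k)
      = Finset.univ.filter (fun k => |z i - z k| ≤ B i k) := by
    apply Finset.filter_congr
    intro k _
    simp [hg i k]
  rw [hfilter]
  by_cases h : |z i - z j| ≤ B i j
  · rw [if_pos ((hg i j).2 h), if_pos h]
  · rw [if_neg (fun hh => h ((hg i j).1 hh)), if_neg h]

/-- Invariance of the equi-topology neighborhood: if `z` is an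
equilibrium (`A(z) z = z`) and `x 0` lies in the invariant equi-topology
neighborhood of `z`, then for every `t` the trajectory `x (t+1) = A(x t) (x t)`
lies in the equi-topology neighborhood of `z` and `G_r(x t) = G_r(z)`. -/
theorem stmt9 {n : ℕ} (r : Fin n → ℝ) (B : Fin n → Fin n → ℝ) (z : Fin n → ℝ)
    (hr : ∀ i, 0 < r i)
    (hB : (∀ i j, B i j = r i) ∨ (∀ i j, B i j = r j))
    (heq : adjMat B z *ᵥ z = z)
    (x : ℕ → Fin n → ℝ)
    (hstep : ∀ t, x (t + 1) = adjMat B (x t) *ᵥ x t)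
    (hx0 : ∀ i, (0 < deltaDist r B z i → |x 0 i - z i| < deltaDist r B z i) ∧
                (deltaDist r B z i = 0 → x 0 i = z i)) :
    ∀ t, (∀ i, (0 < epsDist r z i → |x t i - z i| < epsDist r z i) ∧
               (epsDist r z i = 0 → x t i = z i)) ∧
         (∀ i j, (|x t i - x t j| ≤ B i j) ↔ (|z i - z j| ≤ B i j)) := by
  have hBii : ∀ i : Fin n, (0:ℝ) ≤ B i i := by
    intro i
    rcases hB with h | h <;> rw [h] <;> exact (hr i).le
  -- from delta-neighborhood, get the disjunction used in graph_eq
  have hdisj : ∀ y : Fin n → ℝ,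
      (∀ i, (0 < deltaDist r B z i → |y i - z i| < deltaDist r B z i) ∧
            (deltaDist r B z i = 0 → y i = z i)) →
      ∀ i, y i = z i ∨ |y i - z i| < epsDist r z i := by
    intro y hy i
    rcases lt_or_eq_of_le (delta_nonneg r B z i) with hd | hd
    · exact Or.inr (lt_of_lt_of_le ((hy i).1 hd) (delta_le_eps r B z i))
    · exact Or.inl ((hy i).2 hd.symm)
  -- main induction: delta-neighborhood invariant
  have key : ∀ t, ∀ i, (0 < deltaDist r B z i → |x t i - z i| < deltaDist r B z i) ∧
      (deltaDist r B z i = 0 → x t i = z i) := by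
    intro t
    induction t with
    | zero => exact hx0
    | succ t ih =>
      have hg := graph_eq r B z hB (x t) (hdisj (x t) ih)
      have hA : adjMat B (x t) = adjMat B z := adj_eq B z (x t) hg
      intro i
      set N : Finset (Fin n) := Finset.univ.filter (fun k => |z i - z k| ≤ B i k) with hN
      have hiN : i ∈ N := by
        simp only [hN, Finset.mem_filter, Finset.mem_univ, true_and, sub_self, abs_zero]
        exact hBii i
      have hNne : N.Nonempty := ⟨i, hiN⟩
      have hcard : 0 < (N.card : ℝ) := by
        exact_mod_cast Finset.card_pos.2 hNne
      have hcinv : 0 < ((N.card : ℝ))⁻¹ := inv_pos.2 hcard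
      -- key identity
      have h1 : x (t+1) i = ∑ j, adjMat B z i j * x t j := by
        rw [hstep t, hA]; rfl
      have h2 : z i = ∑ j, adjMat B z i j * z j := by
        conv_lhs => rw [← heq]
        rfl
      have hident : x (t+1) i - z i = ∑ j ∈ N, ((N.card : ℝ))⁻¹ * (x t j - z j) := by
        rw [h1]
        nth_rewrite 1 [h2]
        rw [← Finset.sum_sub_distrib]
        have : ∀ j ∈ Finset.univ, adjMat B z i j * x t j - adjMat B z i j * z j
            = if |z i - z j| ≤ B i j then ((N.card : ℝ))⁻¹ * (x t j - z j) else 0 := by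
          intro j _
          unfold adjMat
          simp only [Matrix.of_apply]
          split
          · rw [← hN]; ring
          · ring
        rw [Finset.sum_congr rfl this, ← Finset.sum_filter]
      -- bounds using ih for neighbors
      have hdltj : ∀ j ∈ N, deltaDist r B z j ≤ deltaDist r B z i := by
        intro j hj
        simp only [hN, Finset.mem_filter, Finset.mem_univ, true_and] at hj
        exact delta_mono r B z hj
      constructor
      · intro hdi
        have hlt : ∀ j ∈ N, |x t j - z j| < deltaDist r B z i := by
          intro j hj
          rcases lt_or_eq_of_le (delta_nonneg r B z j) with hd | hd
          · exact lt_of_lt_of_le ((ih j).1 hd) (hdltj j hj)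
          · rw [(ih j).2 hd.symm]; simpa using hdi
        rw [hident]
        calc |∑ j ∈ N, ((N.card : ℝ))⁻¹ * (x t j - z j)|
            ≤ ∑ j ∈ N, |((N.card : ℝ))⁻¹ * (x t j - z j)| := Finset.abs_sum_le_sum_abs _ _
          _ = ∑ j ∈ N, ((N.card : ℝ))⁻¹ * |x t j - z j| := by
              apply Finset.sum_congr rfl
              intro j _
              rw [abs_mul, abs_of_pos hcinv]
          _ < ∑ j ∈ N, ((N.card : ℝ))⁻¹ * deltaDist r B z i := by
              apply Finset.sum_lt_sum_of_nonempty hNne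
              intro j hj
              exact mul_lt_mul_of_pos_left (hlt j hj) hcinv
          _ = deltaDist r B z i := by
              rw [Finset.sum_const, nsmul_eq_mul]
              field_simp
      · intro hdi
        have hz0 : ∀ j ∈ N, x t j - z j = 0 := by
          intro j hj
          have : deltaDist r B z j = 0 :=
            le_antisymm (hdi ▸ hdltj j hj) (delta_nonneg r B z j)
          rw [(ih j).2 this]; ring
        have : x (t+1) i - z i = 0 := by
          rw [hident, Finset.sum_congr rfl (fun j hj => by rw [hz0 j hj, mul_zero]),
            Finset.sum_const, smul_zero]
        linarith
  intro t
  refine ⟨?_, graph_eq r B z hB (x t) (hdisj (x t) (key t))⟩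
  intro i
  constructor
  · intro he
    rcases lt_or_eq_of_le (delta_nonneg r B z i) with hd | hd
    · exact lt_of_lt_of_le ((key t i).1 hd) (delta_le_eps r B z i)
    · rw [(key t i).2 hd.symm]; simpa using he
  · intro he
    have : deltaDist r B z i = 0 :=
      le_antisymm (he ▸ delta_le_eps r B z i) (delta_nonneg r B z i)
    exact (key t i).2 this
end

section
/- Under the hypotheses of the invariance theorem (x(0) in the invariant equi-topology neighborhood of an equilibrium z), the trajectory x(t) converges as t → ∞ to fvct(x(0)) = lim_{t→∞} A(x(0))^t x(0). -/
/-!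
On the invariant neighbourhood every coordinate stays within `deltaDist ≤ epsDist` of the
equilibrium, and `2 * epsDist` is at most the margin by which each pair of agents lies inside or
outside its proximity threshold. Hence the proximity graph, and with it the averaging matrix `A`,
never changes along the trajectory, so `x t = A ^ t x 0`. The matrix `A` is row-stochastic with
positive diagonal: by Gershgorin every eigenvalue other than `1` lies strictly inside the unit
disc, and power-boundedness rules out Jordan blocks at `1`. Decomposing into generalized
eigenspaces, `A ^ t v` therefore converges.
-/

open Filter Matrix Finset

open Topology

lemma tendsto_choose_mul_pow_sub_of_norm_lt_one {R : Type*} [NormedRing R]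
    [HasSummableGeomSeries R] (m : ℕ) {r : R} (hr : ‖r‖ < 1) :
    Tendsto (fun t : ℕ => (t.choose m : R) * r ^ (t - m)) atTop (𝓝 0) := by
  rw [← tendsto_add_atTop_iff_nat m]
  simpa using (summable_choose_mul_geometric_of_norm_lt_one m hr).tendsto_atTop_zero

namespace Module.End

section Binomial

variable {R M : Type*} [CommRing R] [AddCommGroup M] [Module R M]

theorem pow_apply_eq_sum_of_mem_genEigenspace {f : End R M} {μ : R} {k : ℕ} {w : M}
    (hw : ((f - μ • 1) ^ k) w = 0) (t : ℕ) :
    (f ^ t) w =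
      ∑ m ∈ range k, ((t.choose m : R) * μ ^ (t - m)) • ((f - μ • 1) ^ m) w := by
  obtain ⟨N, rfl⟩ : ∃ N, f = N + μ • 1 := ⟨f - μ • 1, by simp⟩
  simp only [add_sub_cancel_right] at hw ⊢
  have hchoose : ∀ m, t < m → ((t.choose m : R) * μ ^ (t - m)) • (N ^ m) w = 0 :=
    fun m hm => by simp [Nat.choose_eq_zero_of_lt hm]
  have hnil : ∀ m, k ≤ m → ((t.choose m : R) * μ ^ (t - m)) • (N ^ m) w = 0 :=
    fun m hm => by rw [← Nat.sub_add_cancel hm, pow_add, mul_apply, hw, map_zero, smul_zero]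
  calc ((N + μ • 1) ^ t) w
        = ∑ m ∈ range (t + 1), ((t.choose m : R) * μ ^ (t - m)) • (N ^ m) w := by
        rw [((Commute.one_right N).smul_right μ).add_pow, LinearMap.sum_apply]
        refine sum_congr rfl fun m _ => ?_
        simp only [smul_pow, one_pow, mul_apply, LinearMap.smul_apply, one_apply, map_smul,
          natCast_apply]
        rw [map_nsmul, ← Nat.cast_smul_eq_nsmul R, smul_smul, mul_comm]
    _ = ∑ m ∈ range (min (t + 1) k), ((t.choose m : R) * μ ^ (t - m)) • (N ^ m) w :=
        (sum_subset (range_subset_range.2 (min_le_left _ _)) fun m hm hm' =>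
          hnil m (by simp only [mem_range] at hm hm'; omega)).symm
    _ = _ :=
        sum_subset (range_subset_range.2 (min_le_right _ _)) fun m hm hm' =>
          hchoose m (by simp only [mem_range] at hm hm'; omega)

end Binomial

variable {E : Type*} [NormedAddCommGroup E] [NormedSpace ℂ E] {f : End ℂ E}

theorem tendsto_pow_apply_of_mem_maxGenEigenspace {μ : ℂ} (hμ : ‖μ‖ < 1) {w : E}
    (hw : w ∈ f.maxGenEigenspace μ) : Tendsto (fun t => (f ^ t) w) atTop (𝓝 0) := by
  obtain ⟨k, hk⟩ := (mem_maxGenEigenspace f μ w).1 hw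
  simp only [pow_apply_eq_sum_of_mem_genEigenspace hk]
  simpa using tendsto_finsetSum (range k) fun m _ =>
    (tendsto_choose_mul_pow_sub_of_norm_lt_one m hμ).smul_const (((f - μ • 1) ^ m) w)

/-- `v := (f - 1) u` is fixed by `f`, so `f ^ t u = u + t • v` is bounded only if `v = 0`. -/
lemma sub_one_apply_eq_zero_of_sq (hbdd : ∀ w, ∃ C, ∀ t : ℕ, ‖(f ^ t) w‖ ≤ C) {u : E}
    (hu : ((f - 1) ^ 2 : End ℂ E) u = 0) : (f - 1) u = 0 := by
  set v := (f - 1) u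
  have hv : f v = v := by
    rwa [pow_two, mul_apply, LinearMap.sub_apply, one_apply, sub_eq_zero] at hu
  have hfu : f u = u + v := by simp [v]
  have horbit : ∀ t : ℕ, (f ^ t) u = u + (t : ℂ) • v := by
    intro t
    induction t with
    | zero => simp
    | succ t ih =>
      rw [pow_succ', mul_apply, ih, map_add, map_smul, hv, hfu]
      push_cast
      rw [add_smul, one_smul]
      abel
  obtain ⟨C, hC⟩ := hbdd u
  by_contra hv0
  have hvpos : 0 < ‖v‖ := norm_pos_iff.2 hv0
  obtain ⟨t, ht⟩ := exists_nat_gt ((C + ‖u‖) / ‖v‖)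
  have : (t : ℝ) * ‖v‖ ≤ C + ‖u‖ := by
    calc (t : ℝ) * ‖v‖ = ‖(f ^ t) u - u‖ := by simp [horbit, norm_smul]
      _ ≤ ‖(f ^ t) u‖ + ‖u‖ := norm_sub_le _ _
      _ ≤ C + ‖u‖ := by linarith [hC t]
  rw [div_lt_iff₀ hvpos] at ht
  linarith

lemma apply_eq_self_of_mem_maxGenEigenspace_one
    (hbdd : ∀ w, ∃ C, ∀ t : ℕ, ‖(f ^ t) w‖ ≤ C) {w : E}
    (hw : w ∈ f.maxGenEigenspace 1) : f w = w := by
  obtain ⟨k, hk⟩ := (mem_maxGenEigenspace f 1 w).1 hw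
  rw [one_smul] at hk
  have hker : LinearMap.ker (f - 1) = LinearMap.ker ((f - 1) ^ Nat.succ 1) :=
    le_antisymm (fun u hu => by simp_all [pow_two, mul_apply])
      fun u hu => sub_one_apply_eq_zero_of_sq hbdd hu
  have hw' : w ∈ LinearMap.ker ((f - 1) ^ (1 + k)) := by
    rw [pow_add, LinearMap.mem_ker, mul_apply, hk, map_zero]
  rw [← ker_pow_constant (k := 1) (by rwa [pow_one]) k, pow_one, LinearMap.mem_ker] at hw'
  simpa [sub_eq_zero] using hw'

theorem exists_tendsto_pow_apply [FiniteDimensional ℂ E]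
    (hbdd : ∀ w, ∃ C, ∀ t : ℕ, ‖(f ^ t) w‖ ≤ C)
    (hspec : ∀ μ, f.HasEigenvalue μ → μ = 1 ∨ ‖μ‖ < 1) (w : E) :
    ∃ L, Tendsto (fun t => (f ^ t) w) atTop (𝓝 L) := by
  have hw : w ∈ ⨆ μ, f.maxGenEigenspace μ := by
    rw [iSup_maxGenEigenspace_eq_top]; trivial
  refine Submodule.iSup_induction
    (motive := fun w => ∃ L, Tendsto (fun t => (f ^ t) w) atTop (𝓝 L)) _ hw
    (fun μ v hv => ?_) ⟨0, by simp⟩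
    fun u v ⟨Lu, hu⟩ ⟨Lv, hv⟩ => ⟨Lu + Lv, by simpa using hu.add hv⟩
  by_cases hv0 : v = 0
  · exact ⟨0, by simp [hv0]⟩
  have hμ : f.HasEigenvalue μ :=
    (hasUnifEigenvalue_iff_hasUnifEigenvalue_one (by simp)).1
      ((Submodule.ne_bot_iff _).2 ⟨v, hv, hv0⟩)
  rcases hspec μ hμ with rfl | hlt
  · refine ⟨v, ?_⟩
    have hfix : ∀ t : ℕ, (f ^ t) v = v := fun t => by
      rw [coe_pow]
      exact Function.IsFixedPt.iterate (apply_eq_self_of_mem_maxGenEigenspace_one hbdd hv) t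
    simp [hfix]
  · exact ⟨0, tendsto_pow_apply_of_mem_maxGenEigenspace hlt hv⟩

end Module.End

lemma Complex.eq_one_or_norm_lt_one_of_norm_sub_le {μ : ℂ} {a : ℝ} (ha : 0 < a)
    (h : ‖μ - a‖ ≤ 1 - a) : μ = 1 ∨ ‖μ‖ < 1 := by
  have hsq : (μ.re - a) ^ 2 + μ.im ^ 2 ≤ (1 - a) ^ 2 := by
    have h2 : ‖μ - a‖ ^ 2 = (μ.re - a) ^ 2 + μ.im ^ 2 := by
      rw [Complex.sq_norm, Complex.normSq_apply]
      simp only [Complex.sub_re, Complex.sub_im, Complex.ofReal_re, Complex.ofReal_im, sub_zero]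
      ring
    nlinarith [norm_nonneg (μ - a)]
  have ha1 : a ≤ 1 := by linarith [norm_nonneg (μ - a)]
  rcases lt_or_ge (μ.re ^ 2 + μ.im ^ 2) 1 with hlt | hge
  · right
    rw [← sq_lt_one_iff₀ (norm_nonneg μ), Complex.sq_norm, Complex.normSq_apply]
    nlinarith
  · left
    have hre : μ.re = 1 := by nlinarith [sq_nonneg μ.im]
    have him : μ.im = 0 := by rw [hre] at hsq; nlinarith
    exact Complex.ext hre him

namespace Matrix

variable {ι : Type*} [Fintype ι] [DecidableEq ι] {A : Matrix ι ι ℝ}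

lemma norm_map_ofReal_mulVec_le (hA : A ∈ rowStochastic ℝ ι) (w : ι → ℂ) :
    ‖A.map (↑) *ᵥ w‖ ≤ ‖w‖ := by
  refine (pi_norm_le_iff_of_nonneg (norm_nonneg w)).2 fun i => ?_
  calc ‖(A.map (↑) *ᵥ w) i‖ ≤ ∑ j, A i j * ‖w‖ := by
        simp only [mulVec, dotProduct, map_apply]
        refine (norm_sum_le _ _).trans (sum_le_sum fun j _ => ?_)
        rw [norm_mul, Complex.norm_real, Real.norm_of_nonneg
          (nonneg_of_mem_rowStochastic hA)]
        exact mul_le_mul_of_nonneg_left (norm_le_pi_norm w j) (nonneg_of_mem_rowStochastic hA)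
    _ = ‖w‖ := by rw [← sum_mul, sum_row_of_mem_rowStochastic hA, one_mul]

lemma eq_one_or_norm_lt_one_of_hasEigenvalue (hA : A ∈ rowStochastic ℝ ι)
    (hdiag : ∀ i, 0 < A i i) {μ : ℂ}
    (hμ : Module.End.HasEigenvalue (toLin' (A.map ((↑) : ℝ → ℂ))) μ) :
    μ = 1 ∨ ‖μ‖ < 1 := by
  obtain ⟨k, hk⟩ := eigenvalue_mem_ball hμ
  have hrad : ∑ j ∈ univ.erase k, ‖A.map ((↑) : ℝ → ℂ) k j‖ = 1 - A k k := by
    simp only [map_apply, Complex.norm_real,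
      Real.norm_of_nonneg (nonneg_of_mem_rowStochastic hA)]
    rw [← sum_row_of_mem_rowStochastic hA k, ← add_sum_erase _ _ (mem_univ k),
      add_sub_cancel_left]
  rw [Metric.mem_closedBall, hrad, dist_eq_norm, map_apply] at hk
  exact Complex.eq_one_or_norm_lt_one_of_norm_sub_le (hdiag k) hk

theorem exists_tendsto_pow_mulVec (hA : A ∈ rowStochastic ℝ ι) (hdiag : ∀ i, 0 < A i i)
    (v : ι → ℝ) : ∃ L, Tendsto (fun t => (A ^ t) *ᵥ v) atTop (𝓝 L) := by
  have hpow : ∀ (t : ℕ) (w : ι → ℂ),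
      (toLin' (A.map (↑)) ^ t) w = (A ^ t).map (↑) *ᵥ w :=
    fun t w => by
      rw [← toLin'_pow, toLin'_apply]
      exact congrArg (· *ᵥ w) (Matrix.map_pow A Complex.ofRealHom t).symm
  obtain ⟨L, hL⟩ := Module.End.exists_tendsto_pow_apply
    (fun w => ⟨‖w‖, fun t => hpow t w ▸ norm_map_ofReal_mulVec_le (pow_mem hA t) w⟩)
    (fun μ => eq_one_or_norm_lt_one_of_hasEigenvalue hA hdiag) (fun i => (v i : ℂ))
  refine ⟨fun i => (L i).re, ?_⟩
  refine (tendsto_pi_nhds.2 fun i => (Complex.continuous_re.tendsto _).comp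
    (tendsto_pi_nhds.1 hL i)).congr fun t => funext fun i => ?_
  rw [Function.comp_apply, hpow]
  exact (congrArg Complex.re (RingHom.map_mulVec Complex.ofRealHom (A ^ t) v i)).symm.trans
    (Complex.ofReal_re _)

lemma abs_mulVec_apply_lt_of_mem_rowStochastic (hA : A ∈ rowStochastic ℝ ι) {i : ι}
    (hdiag : 0 < A i i) {e : ι → ℝ} {c : ℝ} (hle : ∀ j, A i j ≠ 0 → |e j| ≤ c)
    (hlt : |e i| < c) : |(A *ᵥ e) i| < c := by
  have hterm : ∀ j, A i j * |e j| ≤ A i j * c := fun j => by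
    by_cases hj : A i j = 0
    · simp [hj]
    · exact mul_le_mul_of_nonneg_left (hle j hj) (nonneg_of_mem_rowStochastic hA)
  calc |(A *ᵥ e) i| ≤ ∑ j, A i j * |e j| := by
        refine (abs_sum_le_sum_abs _ _).trans_eq (sum_congr rfl fun j _ => ?_)
        rw [abs_mul, abs_of_nonneg (nonneg_of_mem_rowStochastic hA)]
    _ < ∑ j, A i j * c :=
        sum_lt_sum (fun j _ => hterm j) ⟨i, mem_univ i, mul_lt_mul_of_pos_left hlt hdiag⟩
    _ = c := by rw [← sum_mul, sum_row_of_mem_rowStochastic hA, one_mul]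

end Matrix

section Proximity

variable {n : ℕ} {r : Fin n → ℝ} {B : Fin n → Fin n → ℝ} {z y w : Fin n → ℝ}
  {i j k : Fin n}

lemma adjMat_mem_rowStochastic (hBd : ∀ i, 0 < B i i) (y : Fin n → ℝ) :
    adjMat B y ∈ rowStochastic ℝ (Fin n) := by
  refine mem_rowStochastic_iff_sum.2 ⟨fun i j => ?_, fun i => ?_⟩
  · simp only [adjMat, of_apply]
    split_ifs <;> positivity
  · have hcard : (0 : ℝ) < (univ.filter fun k => |y i - y k| ≤ B i k).card :=
      Nat.cast_pos.2 (card_pos.2 ⟨i, by simpa using (hBd i).le⟩)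
    simp only [adjMat, of_apply]
    rw [← sum_filter, sum_const, nsmul_eq_mul, mul_inv_cancel₀ hcard.ne']

lemma adjMat_apply_self_pos (hBd : ∀ i, 0 < B i i) (y : Fin n → ℝ) (i : Fin n) :
    0 < adjMat B y i i := by
  have hcard : (0 : ℝ) < (univ.filter fun k => |y i - y k| ≤ B i k).card :=
    Nat.cast_pos.2 (card_pos.2 ⟨i, by simpa using (hBd i).le⟩)
  simpa [adjMat, (hBd i).le] using hcard

lemma abs_sub_le_of_adjMat_ne_zero (h : adjMat B y i j ≠ 0) : |y i - y j| ≤ B i j := by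
  by_contra hij
  exact h (by simp [adjMat, hij])

lemma adjMat_congr (h : ∀ i j, |y i - y j| ≤ B i j ↔ |w i - w j| ≤ B i j) :
    adjMat B y = adjMat B w := by
  ext i j
  simp only [adjMat, of_apply, h]

lemma epsDist_nonneg (r z : Fin n → ℝ) (i : Fin n) : 0 ≤ epsDist r z i := by
  refine mul_nonneg (by norm_num) (Real.sInf_nonneg ?_)
  rintro d ⟨j, -, rfl | rfl⟩ <;> exact abs_nonneg _

lemma two_mul_epsDist_le {d : ℝ} (hji : j ≠ i)
    (hd : d = |(|z i - z j| - r i)| ∨ d = |(|z i - z j| - r j)|) : 2 * epsDist r z i ≤ d := by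
  have hbdd : BddBelow {d : ℝ | ∃ j, j ≠ i ∧
      (d = |(|z i - z j| - r i)| ∨ d = |(|z i - z j| - r j)|)} :=
    ⟨0, by rintro d ⟨j, -, rfl | rfl⟩ <;> exact abs_nonneg _⟩
  have := csInf_le hbdd ⟨j, hji, hd⟩
  unfold epsDist
  linarith

lemma deltaDist_nonneg (r : Fin n → ℝ) (B : Fin n → Fin n → ℝ) (z : Fin n → ℝ)
    (i : Fin n) : 0 ≤ deltaDist r B z i :=
  Real.sInf_nonneg <| by rintro d ⟨j, -, rfl⟩; exact epsDist_nonneg r z j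

lemma bddBelow_deltaDist_set (r : Fin n → ℝ) (B : Fin n → Fin n → ℝ) (z : Fin n → ℝ)
    (i : Fin n) : BddBelow {d : ℝ | ∃ j, Relation.ReflTransGen
      (fun a b => |z a - z b| ≤ B a b) j i ∧ d = epsDist r z j} :=
  ⟨0, by rintro d ⟨j, -, rfl⟩; exact epsDist_nonneg r z j⟩

lemma deltaDist_le_epsDist : deltaDist r B z i ≤ epsDist r z i :=
  csInf_le (bddBelow_deltaDist_set r B z i) ⟨i, .refl, rfl⟩

lemma deltaDist_le_of_abs_sub_le (hik : |z i - z k| ≤ B i k) :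
    deltaDist r B z k ≤ deltaDist r B z i :=
  csInf_le_csInf (bddBelow_deltaDist_set r B z k) ⟨_, i, .refl, rfl⟩
    fun _ ⟨j, hj, hd⟩ => ⟨j, hj.tail hik, hd⟩

/-- Membership of `y` in the invariant equi-topology neighbourhood of the equilibrium `z`. -/
def InvNbhd (r : Fin n → ℝ) (B : Fin n → Fin n → ℝ) (z y : Fin n → ℝ) : Prop :=
  ∀ i, (0 < deltaDist r B z i → |y i - z i| < deltaDist r B z i) ∧
       (deltaDist r B z i = 0 → y i = z i)

lemma InvNbhd.abs_sub_le (hy : InvNbhd r B z y) (i : Fin n) :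
    |y i - z i| ≤ deltaDist r B z i := by
  rcases (deltaDist_nonneg r B z i).lt_or_eq with h | h
  · exact ((hy i).1 h).le
  · simp [(hy i).2 h.symm, ← h]

lemma InvNbhd.abs_sub_lt (hy : InvNbhd r B z y) {c : ℝ} (hc : 0 < c)
    (hδ : deltaDist r B z i ≤ c) : |y i - z i| < c := by
  rcases (deltaDist_nonneg r B z i).lt_or_eq with h | h
  · exact ((hy i).1 h).trans_le hδ
  · simpa [(hy i).2 h.symm] using hc

lemma InvNbhd.eq_of_epsDist_nonpos (hy : InvNbhd r B z y) (h : epsDist r z i ≤ 0) :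
    y i = z i :=
  (hy i).2 (le_antisymm (deltaDist_le_epsDist.trans h) (deltaDist_nonneg r B z i))

lemma le_iff_le_of_abs_sub_lt {a a' b : ℝ} (h : |a - a'| < |a' - b|) : a ≤ b ↔ a' ≤ b := by
  rw [abs_lt] at h
  constructor <;> intro hab <;> by_contra! hba
  · rw [abs_of_pos (sub_pos.2 hba)] at h; linarith
  · rw [abs_of_nonpos (by linarith)] at h; linarith

lemma InvNbhd.abs_sub_le_iff (hB : (∀ i j, B i j = r i) ∨ (∀ i j, B i j = r j))
    (hy : InvNbhd r B z y) (i j : Fin n) :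
    |y i - y j| ≤ B i j ↔ |z i - z j| ≤ B i j := by
  rcases eq_or_ne i j with rfl | hij
  · simp
  -- `g` is the margin by which the edge `(i, j)` is present in, or absent from, `G_r(z)`.
  set g := |(|z i - z j| - B i j)|
  have hεi : 2 * epsDist r z i ≤ g :=
    two_mul_epsDist_le hij.symm (by rcases hB with h | h <;> simp [g, h])
  have hεj : 2 * epsDist r z j ≤ g :=
    two_mul_epsDist_le hij (by rcases hB with h | h <;> simp [g, h, abs_sub_comm (z i)])
  rcases (abs_nonneg (|z i - z j| - B i j)).eq_or_lt with hg | hg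
  · rw [hy.eq_of_epsDist_nonpos (by linarith), hy.eq_of_epsDist_nonpos (i := j) (by linarith)]
  refine le_iff_le_of_abs_sub_lt ?_
  have hyi := hy.abs_sub_lt (i := i) (half_pos hg) (deltaDist_le_epsDist.trans (by linarith))
  have hyj := hy.abs_sub_lt (i := j) (half_pos hg) (deltaDist_le_epsDist.trans (by linarith))
  calc |(|y i - y j| - |z i - z j|)| ≤ |(y i - z i) - (y j - z j)| := by
        rw [sub_sub_sub_comm]; exact abs_abs_sub_abs_le_abs_sub _ _
    _ ≤ |y i - z i| + |y j - z j| := abs_sub _ _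
    _ < g := by linarith

lemma InvNbhd.adjMat_eq (hB : (∀ i j, B i j = r i) ∨ (∀ i j, B i j = r j))
    (hy : InvNbhd r B z y) : adjMat B y = adjMat B z :=
  adjMat_congr (hy.abs_sub_le_iff hB)

/-- `(A y - z) i = (A (y - z)) i` averages the deviations of the agents `j` with `A i j ≠ 0`,
whose `deltaDist` is at most that of `i`. -/
lemma InvNbhd.adjMat_mulVec (hB : (∀ i j, B i j = r i) ∨ (∀ i j, B i j = r j))
    (hBd : ∀ i, 0 < B i i) (heq : adjMat B z *ᵥ z = z) (hy : InvNbhd r B z y) :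
    InvNbhd r B z (adjMat B y *ᵥ y) := by
  rw [hy.adjMat_eq hB]
  have hdev : ∀ i, (adjMat B z *ᵥ y) i - z i = (adjMat B z *ᵥ (y - z)) i := fun i => by
    rw [mulVec_sub, heq, Pi.sub_apply]
  have hedge : ∀ i j, adjMat B z i j ≠ 0 → deltaDist r B z j ≤ deltaDist r B z i :=
    fun i j h => deltaDist_le_of_abs_sub_le (abs_sub_le_of_adjMat_ne_zero h)
  intro i
  rw [hdev]
  refine ⟨fun hpos => ?_, fun h0 => ?_⟩
  · exact abs_mulVec_apply_lt_of_mem_rowStochastic (adjMat_mem_rowStochastic hBd z)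
      (adjMat_apply_self_pos hBd z i) (fun j hj => (hy.abs_sub_le j).trans (hedge i j hj))
      ((hy i).1 hpos)
  · rw [← sub_eq_zero, hdev, mulVec, dotProduct]
    refine sum_eq_zero fun j _ => ?_
    by_cases hj : adjMat B z i j = 0
    · simp [hj]
    · have hδj : deltaDist r B z j = 0 :=
        le_antisymm (h0 ▸ hedge i j hj) (deltaDist_nonneg r B z j)
      simp [(hy j).2 hδj]

end Proximity

/-- Under the hypotheses of the invariance theorem (`z` an
equilibrium and `x 0` in its invariant equi-topology neighborhood), the
trajectory `x (t+1) = A(x t) (x t)` converges to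
`fvct (x 0) = lim A(x 0)^t (x 0)`. -/
theorem stmt10 {n : ℕ} (r : Fin n → ℝ) (B : Fin n → Fin n → ℝ) (z : Fin n → ℝ)
    (hr : ∀ i, 0 < r i)
    (hB : (∀ i j, B i j = r i) ∨ (∀ i j, B i j = r j))
    (heq : adjMat B z *ᵥ z = z)
    (x : ℕ → Fin n → ℝ)
    (hstep : ∀ t, x (t + 1) = adjMat B (x t) *ᵥ x t)
    (hx0 : ∀ i, (0 < deltaDist r B z i → |x 0 i - z i| < deltaDist r B z i) ∧
                (deltaDist r B z i = 0 → x 0 i = z i)) :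
    ∃ f : Fin n → ℝ,
      (∀ i, Tendsto (fun t => ((adjMat B (x 0) ^ t) *ᵥ x 0) i) atTop (nhds (f i))) ∧
      (∀ i, Tendsto (fun t => x t i) atTop (nhds (f i))) := by
  have hBd : ∀ i, 0 < B i i := by
    rcases hB with h | h <;> exact fun i => h i i ▸ hr i
  have hnbhd : ∀ t, InvNbhd r B z (x t) := fun t => by
    induction t with
    | zero => exact hx0
    | succ t ih => rw [hstep]; exact ih.adjMat_mulVec hB hBd heq
  have hA : ∀ t, adjMat B (x t) = adjMat B z := fun t => (hnbhd t).adjMat_eq hB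
  have hx : ∀ t, x t = adjMat B z ^ t *ᵥ x 0 := fun t => by
    induction t with
    | zero => simp
    | succ t ih => rw [hstep, hA, ih, mulVec_mulVec, ← pow_succ']
  obtain ⟨L, hL⟩ := exists_tendsto_pow_mulVec (adjMat_mem_rowStochastic hBd z)
    (adjMat_apply_self_pos hBd z) (x 0)
  refine ⟨L, fun i => ?_, fun i => ?_⟩
  · rw [hA 0]
    exact tendsto_pi_nhds.1 hL i
  · exact (tendsto_pi_nhds.1 hL i).congr fun t => by rw [hx t]
end
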